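/- arXiv:2404.19515 — 3 statements merged into one kernel-verified Lean document; each statement's English description precedes it below -/
import Mathlib

section
/- Let (X,d) be a metric space and let (x_n), (y_n) be two FD-sequences (sequences with finite distance-series). Then (x_n) and (y_n) are Cauchy equivalent (i.e. d(x_n, y_n) → 0) if and only if there exists an interlaced sequence, alternating x_{m_1}, y_{m_1}, y_{m_2}, x_{m_2}, x_{m_3}, y_{m_3}, ... along increasing indices, which itself has finite distance-series. -/
/-!
If `d(xₙ, yₙ) → 0`, choose `m` with `d(x_{m j}, y_{m j}) < 2⁻ʲ`. Every step of the interlaced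
sequence is then either such a cross distance or a jump `x_{m j} → x_{m (j+1)}` (or the same in
`y`), and the jumps along a subsequence are dominated by disjoint blocks of the distance series.
Conversely, the cross distances `d(x_{m j}, y_{m j})` are every other step of the interlaced
sequence, so they tend to `0`; as `n ↦ d(xₙ, yₙ)` is Cauchy, the whole sequence tends to `0`.
-/

open Filter Finset

theorem Summable.comp_div_two {M : Type*} [AddCommMonoid M] [TopologicalSpace M] [ContinuousAdd M]
    {f : ℕ → M} (hf : Summable f) : Summable fun k => f (k / 2) :=
  Summable.even_add_odd (by simpa using hf) (by simpa [Nat.mul_add_div] using hf)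

theorem summable_dist_comp_of_monotone {X : Type*} [PseudoMetricSpace X] {x : ℕ → X}
    (hx : Summable fun k => dist (x k) (x (k + 1))) {m : ℕ → ℕ} (hm : Monotone m) :
    Summable fun j => dist (x (m j)) (x (m (j + 1))) := by
  refine summable_of_sum_range_le (c := ∑' k, dist (x k) (x (k + 1))) (fun _ => dist_nonneg)
    fun n => ?_
  have partial_le : ∑ j ∈ range n, dist (x (m j)) (x (m (j + 1)))
      ≤ ∑ i ∈ Ico (m 0) (m n), dist (x i) (x (i + 1)) := by
    induction n with
    | zero => simp
    | succ n ih =>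
      rw [sum_range_succ, ← sum_Ico_consecutive _ (hm n.zero_le) (hm n.le_succ)]
      exact add_le_add ih (dist_le_Ico_sum_dist x (hm n.le_succ))
  exact partial_le.trans (hx.sum_le_tsum _ fun _ _ => dist_nonneg)

theorem CauchySeq.dist {X : Type*} [PseudoMetricSpace X] {x y : ℕ → X}
    (hx : CauchySeq x) (hy : CauchySeq y) : CauchySeq fun n => dist (x n) (y n) :=
  uniformContinuous_dist.comp_cauchySeq (hx.prodMk hy)

section Interlace

variable {X : Type*} [PseudoMetricSpace X] (x y : ℕ → X) (m : ℕ → ℕ)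

/-- The sequence `x (m 0), y (m 0), y (m 1), x (m 1), x (m 2), y (m 2), …`: the pair at
positions `2j, 2j + 1` joins `x (m j)` and `y (m j)`, and consecutive pairs are linked by a
jump inside `x` or inside `y`. -/
def interlace (n : ℕ) : X :=
  if n % 4 = 0 ∨ n % 4 = 3 then x (m (n / 2)) else y (m (n / 2))

theorem dist_interlace_two_mul (j : ℕ) :
    dist (interlace x y m (2 * j)) (interlace x y m (2 * j + 1)) = dist (x (m j)) (y (m j)) := by
  rcases Nat.even_or_odd j with ⟨t, rfl⟩ | ⟨t, rfl⟩
  · simp [interlace, show (2 * (t + t)) % 4 = 0 by omega, show (2 * (t + t) + 1) % 4 = 1 by omega,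
      show (2 * (t + t) + 1) / 2 = t + t by omega]
  · simp [interlace, show (2 * (2 * t + 1)) % 4 = 2 by omega,
      show (2 * (2 * t + 1) + 1) % 4 = 3 by omega, show (2 * (2 * t + 1) + 1) / 2 = 2 * t + 1 by omega,
      dist_comm]

theorem dist_interlace_succ_le (k : ℕ) :
    dist (interlace x y m k) (interlace x y m (k + 1)) ≤
      dist (x (m (k / 2))) (y (m (k / 2))) + dist (x (m (k / 2))) (x (m (k / 2 + 1)))
        + dist (y (m (k / 2))) (y (m (k / 2 + 1))) := by
  have hx := dist_nonneg (x := x (m (k / 2))) (y := x (m (k / 2 + 1)))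
  have hy := dist_nonneg (x := y (m (k / 2))) (y := y (m (k / 2 + 1)))
  have hxy := dist_nonneg (x := x (m (k / 2))) (y := y (m (k / 2)))
  have hk : k % 4 = 0 ∨ k % 4 = 1 ∨ k % 4 = 2 ∨ k % 4 = 3 := by omega
  rcases hk with hk | hk | hk | hk
  · have hj : (k + 1) / 2 = k / 2 := by omega
    simp only [interlace, hk, hj, show (k + 1) % 4 = 1 by omega]
    norm_num; linarith
  · have hj : (k + 1) / 2 = k / 2 + 1 := by omega
    simp only [interlace, hk, hj, show (k + 1) % 4 = 2 by omega]
    norm_num; linarith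
  · have hj : (k + 1) / 2 = k / 2 := by omega
    simp only [interlace, hk, hj, show (k + 1) % 4 = 3 by omega]
    norm_num; rw [dist_comm]; linarith
  · have hj : (k + 1) / 2 = k / 2 + 1 := by omega
    simp only [interlace, hk, hj, show (k + 1) % 4 = 0 by omega]
    norm_num; linarith

end Interlace

/-- Two FD-sequences `(xₙ)`, `(yₙ)` in a metric space are Cauchy
equivalent (`dist (xₙ) (yₙ) → 0`) iff there is an interlaced sequence
`x_{m₀}, y_{m₀}, y_{m₁}, x_{m₁}, x_{m₂}, y_{m₂}, …` along strictly increasing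
indices which itself has finite distance-series. -/
theorem stmt3 {X : Type*} [MetricSpace X] (x y : ℕ → X)
    (hx : Summable (fun k => dist (x k) (x (k + 1))))
    (hy : Summable (fun k => dist (y k) (y (k + 1)))) :
    Filter.Tendsto (fun n => dist (x n) (y n)) Filter.atTop (nhds 0) ↔
      ∃ m : ℕ → ℕ, StrictMono m ∧
        Summable (fun k =>
          dist ((fun n => if n % 4 = 0 ∨ n % 4 = 3 then x (m (n / 2)) else y (m (n / 2))) k)
               ((fun n => if n % 4 = 0 ∨ n % 4 = 3 then x (m (n / 2)) else y (m (n / 2))) (k + 1))) := by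
  change _ ↔ ∃ m : ℕ → ℕ, StrictMono m ∧
    Summable fun k => dist (interlace x y m k) (interlace x y m (k + 1))
  constructor
  · intro h
    obtain ⟨m, hm, hclose⟩ := extraction_forall_of_eventually
      fun j => h.eventually (gt_mem_nhds (pow_pos (one_half_pos (α := ℝ)) j))
    have hbound : Summable fun j => dist (x (m j)) (y (m j)) + dist (x (m j)) (x (m (j + 1)))
        + dist (y (m j)) (y (m (j + 1))) :=
      ((summable_geometric_two.of_nonneg_of_le (fun _ => dist_nonneg) fun j => (hclose j).le).add
        (summable_dist_comp_of_monotone hx hm.monotone)).add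
        (summable_dist_comp_of_monotone hy hm.monotone)
    exact ⟨m, hm, hbound.comp_div_two.of_nonneg_of_le (fun _ => dist_nonneg)
      (dist_interlace_succ_le x y m)⟩
  · rintro ⟨m, hm, hsum⟩
    have hsub : Tendsto (fun j => dist (x (m j)) (y (m j))) atTop (nhds 0) := by
      simpa only [Function.comp_def, id, dist_interlace_two_mul] using
        hsum.tendsto_atTop_zero.comp (tendsto_id.const_mul_atTop' two_pos)
    exact tendsto_nhds_of_cauchySeq_of_subseq
      ((cauchySeq_of_summable_dist hx).dist (cauchySeq_of_summable_dist hy)) hm.tendsto_atTop hsub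
end

section
/- Let V be a real vector space and let ‖·‖ : V → [0,∞) be a weak norm (positively homogeneous, subadditive, vanishing only at 0). For each p ∈ [1,∞), the function ‖v‖^{(p)} := (½(‖v‖^p + ‖−v‖^p))^{1/p} is a genuine (symmetric) norm on V; in particular it is subadditive, symmetric under v ↦ −v, and absolutely homogeneous. -/
/-!
`‖v‖^{(p)}` is the power mean of exponent `p` of the two numbers `‖v‖` and `‖-v‖`. The norm
axioms for it come from those of `‖·‖` through three properties of this power mean on
nonnegative reals: it is monotone, homogeneous, and, for `p ≥ 1`, subadditive as a function of
the pair (Minkowski's inequality in `ℓ^p` of two points). Absolute homogeneity follows from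
positive homogeneity together with the symmetry under `v ↦ -v` built into the definition.
-/

/-- The `p`-symmetrisation `‖v‖^{(p)} = (½(‖v‖^p + ‖-v‖^p))^{1/p}` of a weak norm. -/
noncomputable def pSymmetrisation {V : Type*} [Neg V] (N : V → ℝ) (p : ℝ) : V → ℝ :=
  fun v => ((N v ^ p + N (-v) ^ p) / 2) ^ (1 / p)

open Real

noncomputable def powerMean (p x y : ℝ) : ℝ :=
  ((x ^ p + y ^ p) / 2) ^ (1 / p)

section PowerMean

variable {p x y x' y' : ℝ}

theorem powerMean_comm (p x y : ℝ) : powerMean p x y = powerMean p y x := by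
  rw [powerMean, powerMean, add_comm]

private theorem rpow_add_rpow_div_two_nonneg (hx : 0 ≤ x) (hy : 0 ≤ y) :
    0 ≤ (x ^ p + y ^ p) / 2 := by
  have := rpow_nonneg hx p
  have := rpow_nonneg hy p
  positivity

theorem powerMean_nonneg (hx : 0 ≤ x) (hy : 0 ≤ y) : 0 ≤ powerMean p x y :=
  rpow_nonneg (rpow_add_rpow_div_two_nonneg hx hy) _

theorem powerMean_eq_zero_iff (hp : p ≠ 0) (hx : 0 ≤ x) (hy : 0 ≤ y) :
    powerMean p x y = 0 ↔ x = 0 ∧ y = 0 := by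
  have hxp := rpow_nonneg hx p
  have hyp := rpow_nonneg hy p
  rw [powerMean, rpow_eq_zero (rpow_add_rpow_div_two_nonneg hx hy) (one_div_ne_zero hp),
    div_eq_zero_iff, or_iff_left two_ne_zero, add_eq_zero_iff_of_nonneg hxp hyp,
    rpow_eq_zero hx hp, rpow_eq_zero hy hp]

theorem powerMean_le_powerMean (hp : 0 ≤ p) (hx : 0 ≤ x) (hy : 0 ≤ y)
    (hxx' : x ≤ x') (hyy' : y ≤ y') : powerMean p x y ≤ powerMean p x' y' := by
  unfold powerMean
  gcongr

theorem powerMean_mul (hp : p ≠ 0) {c : ℝ} (hc : 0 ≤ c) (hx : 0 ≤ x) (hy : 0 ≤ y) :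
    powerMean p (c * x) (c * y) = c * powerMean p x y := by
  rw [powerMean, mul_rpow hc hx, mul_rpow hc hy, ← mul_add, mul_div_assoc,
    mul_rpow (rpow_nonneg hc p) (rpow_add_rpow_div_two_nonneg hx hy),
    one_div, rpow_rpow_inv hc hp, powerMean, one_div]

theorem powerMean_add_le (hp : 1 ≤ p) {a b c d : ℝ}
    (ha : 0 ≤ a) (hb : 0 ≤ b) (hc : 0 ≤ c) (hd : 0 ≤ d) :
    powerMean p (a + b) (c + d) ≤ powerMean p a c + powerMean p b d := by
  have minkowski := Lp_add_le_of_nonneg (s := Finset.univ) (f := ![a, c]) (g := ![b, d]) hp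
    (by intro i _; fin_cases i <;> assumption) (by intro i _; fin_cases i <;> assumption)
  simp only [Fin.sum_univ_two, Matrix.cons_val_zero, Matrix.cons_val_one] at minkowski
  have hp0 : 0 ≤ p := zero_le_one.trans hp
  have hsum {u v : ℝ} (hu : 0 ≤ u) (hv : 0 ≤ v) : 0 ≤ u ^ p + v ^ p :=
    add_nonneg (rpow_nonneg hu p) (rpow_nonneg hv p)
  simp only [powerMean]
  rw [div_rpow (hsum (add_nonneg ha hb) (add_nonneg hc hd)) zero_le_two,
    div_rpow (hsum ha hc) zero_le_two, div_rpow (hsum hb hd) zero_le_two, ← add_div]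
  gcongr

end PowerMean

section pSymmetrisation

variable {V : Type*} {N : V → ℝ} {p : ℝ}

theorem pSymmetrisation_eq_powerMean [Neg V] (N : V → ℝ) (p : ℝ) (v : V) :
    pSymmetrisation N p v = powerMean p (N v) (N (-v)) :=
  rfl

theorem pSymmetrisation_neg [InvolutiveNeg V] (N : V → ℝ) (p : ℝ) (v : V) :
    pSymmetrisation N p (-v) = pSymmetrisation N p v := by
  rw [pSymmetrisation_eq_powerMean, neg_neg, powerMean_comm, pSymmetrisation_eq_powerMean]

theorem pSymmetrisation_nonneg [Neg V] (h_nonneg : ∀ v, 0 ≤ N v) (v : V) :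
    0 ≤ pSymmetrisation N p v :=
  powerMean_nonneg (h_nonneg v) (h_nonneg (-v))

theorem pSymmetrisation_eq_zero_iff [AddGroup V] (h_nonneg : ∀ v, 0 ≤ N v)
    (h_zero : ∀ v, N v = 0 ↔ v = 0) (hp : p ≠ 0) (v : V) : pSymmetrisation N p v = 0 ↔ v = 0 := by
  rw [pSymmetrisation_eq_powerMean, powerMean_eq_zero_iff hp (h_nonneg v) (h_nonneg (-v)),
    h_zero, h_zero, neg_eq_zero, and_self]

theorem pSymmetrisation_add_le [AddCommGroup V] (h_nonneg : ∀ v, 0 ≤ N v)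
    (h_add : ∀ v w, N (v + w) ≤ N v + N w) (hp : 1 ≤ p) (v w : V) :
    pSymmetrisation N p (v + w) ≤ pSymmetrisation N p v + pSymmetrisation N p w :=
  calc pSymmetrisation N p (v + w) = powerMean p (N (v + w)) (N (-v + -w)) := by
        rw [pSymmetrisation_eq_powerMean, neg_add]
    _ ≤ powerMean p (N v + N w) (N (-v) + N (-w)) :=
        powerMean_le_powerMean (zero_le_one.trans hp) (h_nonneg _) (h_nonneg _)
          (h_add v w) (h_add (-v) (-w))
    _ ≤ pSymmetrisation N p v + pSymmetrisation N p w :=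
        powerMean_add_le hp (h_nonneg v) (h_nonneg w) (h_nonneg (-v)) (h_nonneg (-w))

theorem pSymmetrisation_smul_of_pos [AddCommGroup V] [Module ℝ V] (h_nonneg : ∀ v, 0 ≤ N v)
    (h_hom : ∀ (c : ℝ), 0 < c → ∀ v, N (c • v) = c * N v) (hp : p ≠ 0) {c : ℝ} (hc : 0 < c)
    (v : V) : pSymmetrisation N p (c • v) = c * pSymmetrisation N p v := by
  rw [pSymmetrisation_eq_powerMean, ← smul_neg, h_hom c hc, h_hom c hc,
    powerMean_mul hp hc.le (h_nonneg v) (h_nonneg (-v)), pSymmetrisation_eq_powerMean]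

theorem pSymmetrisation_smul [AddCommGroup V] [Module ℝ V] (h_nonneg : ∀ v, 0 ≤ N v)
    (h_hom : ∀ (c : ℝ), 0 < c → ∀ v, N (c • v) = c * N v) (hp : p ≠ 0) (c : ℝ) (v : V) :
    pSymmetrisation N p (c • v) = |c| * pSymmetrisation N p v := by
  rcases lt_trichotomy c 0 with hc | rfl | hc
  · rw [← neg_smul_neg, pSymmetrisation_smul_of_pos h_nonneg h_hom hp (neg_pos.mpr hc),
      pSymmetrisation_neg, abs_of_neg hc]
  · have hN0 : N 0 = 0 := by
      have h := h_hom 2 two_pos 0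
      rw [smul_zero] at h
      linarith
    rw [zero_smul, abs_zero, zero_mul, pSymmetrisation_eq_powerMean, neg_zero,
      hN0, (powerMean_eq_zero_iff hp le_rfl le_rfl).mpr ⟨rfl, rfl⟩]
  · rw [pSymmetrisation_smul_of_pos h_nonneg h_hom hp hc, abs_of_pos hc]

end pSymmetrisation

/-- For a weak norm `N` on a real vector space and `p ∈ [1,∞)`, the
`p`-symmetrisation is a genuine (symmetric) norm: nonnegative, vanishing exactly at 0,
subadditive, symmetric under `v ↦ -v`, and absolutely homogeneous. -/
theorem stmt4 {V : Type*} [AddCommGroup V] [Module ℝ V] (N : V → ℝ)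
    (h_nonneg : ∀ v, 0 ≤ N v)
    (h_zero : ∀ v, N v = 0 ↔ v = 0)
    (h_add : ∀ v w, N (v + w) ≤ N v + N w)
    (h_hom : ∀ (c : ℝ), 0 < c → ∀ v, N (c • v) = c * N v)
    (p : ℝ) (hp : 1 ≤ p) :
    (∀ v, 0 ≤ pSymmetrisation N p v) ∧
    (∀ v, pSymmetrisation N p v = 0 ↔ v = 0) ∧
    (∀ v w, pSymmetrisation N p (v + w) ≤ pSymmetrisation N p v + pSymmetrisation N p w) ∧
    (∀ v, pSymmetrisation N p (-v) = pSymmetrisation N p v) ∧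
    (∀ (c : ℝ) (v : V), pSymmetrisation N p (c • v) = |c| * pSymmetrisation N p v) := by
  have hp0 : p ≠ 0 := (zero_lt_one.trans_le hp).ne'
  exact ⟨pSymmetrisation_nonneg h_nonneg, pSymmetrisation_eq_zero_iff h_nonneg h_zero hp0,
    pSymmetrisation_add_le h_nonneg h_add hp, pSymmetrisation_neg N p,
    pSymmetrisation_smul h_nonneg h_hom hp0⟩
end

section
/- There is no PSL(2,ℤ)-invariant finite asymmetric metric d on the hyperbolic plane ℍ² for which every anti-clockwise horocycle segment of the form t ↦ [[1,t],[0,1]]·z (t ∈ [0,1], z ∈ ℍ²) is a geodesic. More precisely, assuming all such segments are geodesics of a common length normalized to 1, one can exhibit six horocyclic geodesic segments with lengths a, b, c₁, c₂, d₁, d₂ satisfying a = 1, b = 2, c₁+c₂ < 1, d₁+d₂ < 1, together with triangle inequalities a ≤ c₁+d₂ and b ≤ c₂+d₁, yielding the contradiction 3 = a+b ≤ (c₁+c₂)+(d₁+d₂) < 2. -/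
open scoped UpperHalfPlane MatrixGroups

noncomputable section S10aux

namespace S10

open UpperHalfPlane Matrix Real

/-- A point of `ℍ` with given real and imaginary parts. -/
def pt (x y : ℝ) (hy : 0 < y) : ℍ := ⟨⟨x, y⟩, hy⟩

lemma pt_coe (x y : ℝ) (hy : 0 < y) : (pt x y hy : ℂ) = ⟨x, y⟩ := rfl

lemma pt_congr {x x' y : ℝ} (hy : 0 < y) (h : x = x') : pt x y hy = pt x' y hy := by rw [h]

lemma vadd_pt (t x y : ℝ) (hy : 0 < y) : t +ᵥ pt x y hy = pt (t + x) y hy := by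
  apply UpperHalfPlane.ext
  rw [UpperHalfPlane.coe_vadd, pt_coe, pt_coe]
  apply Complex.ext <;> simp

/-- Build an element of `SL(2,ℤ)` from four explicit entries. -/
def mkSL (a b c d : ℤ) (hdet : (!![a, b; c, d] : Matrix (Fin 2) (Fin 2) ℤ).det = 1) :
    SL(2, ℤ) := ⟨!![a, b; c, d], hdet⟩

/-- Recognize the image of a Möbius action of an explicit integral matrix. -/
lemma smul_mk_eq (a b c d : ℤ) (hdet : (!![a, b; c, d] : Matrix (Fin 2) (Fin 2) ℤ).det = 1)
    (z w : ℍ) (h : (w : ℂ) * ((c : ℂ) * (z : ℂ) + (d : ℂ)) = (a : ℂ) * (z : ℂ) + (b : ℂ)) :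
    mkSL a b c d hdet • z = w := by
  have hdenom : ((c : ℂ) * (z : ℂ) + (d : ℂ)) ≠ 0 := by
    intro h0
    have him := congrArg Complex.im h0
    simp [Complex.add_im, Complex.mul_im] at him
    have hc : (c : ℝ) = 0 := by
      rcases him with h' | h'
      · exact_mod_cast congrArg (fun n : ℤ => (n : ℝ)) h'
      · exact absurd h' (ne_of_gt z.im_pos)
    have hre := congrArg Complex.re h0
    simp [Complex.add_re, Complex.mul_re, hc] at hre
    have hc' : c = 0 := by exact_mod_cast hc
    have hd' : d = 0 := by exact_mod_cast hre
    rw [hc', hd'] at hdet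
    simp [Matrix.det_fin_two_of] at hdet
  apply UpperHalfPlane.ext
  rw [UpperHalfPlane.specialLinearGroup_apply, UpperHalfPlane.coe_mk]
  have e00 : (mkSL a b c d hdet) 0 0 = a := by simp [mkSL]
  have e01 : (mkSL a b c d hdet) 0 1 = b := by simp [mkSL]
  have e10 : (mkSL a b c d hdet) 1 0 = c := by simp [mkSL]
  have e11 : (mkSL a b c d hdet) 1 1 = d := by simp [mkSL]
  rw [e00, e01, e10, e11]
  have hcast : ∀ n : ℤ, ((algebraMap ℤ ℝ n : ℝ) : ℂ) = (n : ℂ) := by intro n; simp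
  rw [hcast, hcast, hcast, hcast]
  rw [div_eq_iff hdenom, ← h]

/-- The translation matrices. -/
def Tk (k : ℤ) : SL(2, ℤ) := mkSL 1 k 0 1 (by simp [Matrix.det_fin_two_of])

lemma Tk_smul (k : ℤ) (z : ℍ) : Tk k • z = (k : ℝ) +ᵥ z := by
  rw [Tk]; apply smul_mk_eq
  rw [UpperHalfPlane.coe_vadd]
  push_cast
  ring

/-- The inversion matrix. -/
def Sm : SL(2, ℤ) := mkSL 0 (-1) 1 0 (by simp [Matrix.det_fin_two_of])

lemma Sm_smul (z w : ℍ) (h : (w : ℂ) * (z : ℂ) = -1) : Sm • z = w := by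
  rw [Sm]; apply smul_mk_eq
  push_cast
  linear_combination h

/-- The matrix `[[1,0],[2,1]]`. -/
def A2 : SL(2, ℤ) := mkSL 1 0 2 1 (by simp [Matrix.det_fin_two_of])

lemma A2_smul (z w : ℍ) (h : (w : ℂ) * (2 * (z : ℂ) + 1) = (z : ℂ)) : A2 • z = w := by
  rw [A2]; apply smul_mk_eq
  push_cast
  linear_combination h

-- numeric facts
lemma r3_sq : Real.sqrt 3 ^ 2 = 3 := Real.sq_sqrt (by norm_num)
lemma r99_sq : Real.sqrt 99 ^ 2 = 99 := Real.sq_sqrt (by norm_num)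
lemma r399_sq : Real.sqrt 399 ^ 2 = 399 := Real.sq_sqrt (by norm_num)

lemma r3_bounds : 17/10 ≤ Real.sqrt 3 ∧ Real.sqrt 3 ≤ 18/10 := by
  constructor <;> nlinarith [r3_sq, Real.sqrt_nonneg 3]

lemma r99_bounds : 0 ≤ Real.sqrt 99 ∧ Real.sqrt 99 ≤ 10 := by
  refine ⟨Real.sqrt_nonneg 99, ?_⟩
  nlinarith [r99_sq, Real.sqrt_nonneg 99]

lemma r399_bounds : 10 ≤ Real.sqrt 399 ∧ Real.sqrt 399 ≤ 20 := by
  constructor <;> nlinarith [r399_sq, Real.sqrt_nonneg 399]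

lemma r3_le_r399 : Real.sqrt 3 ≤ Real.sqrt 399 := Real.sqrt_le_sqrt (by norm_num)

lemma h20 : (0:ℝ) < 1/20 := by norm_num
lemma h5 : (0:ℝ) < 5 := by norm_num

-- The points
def w1 : ℍ := pt (Real.sqrt 3 / 20) (1/20) h20
def w2 : ℍ := pt (Real.sqrt 399 / 20) (1/20) h20
def w3 : ℍ := pt (-(Real.sqrt 399) / 20) (1/20) h20
def w4 : ℍ := pt (-(Real.sqrt 3) / 20) (1/20) h20
def w5 : ℍ := pt (-((1 + Real.sqrt 99 / 10) / 2)) (1/20) h20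
def w6 : ℍ := pt (-(1/2)) (1/20) h20
def w7 : ℍ := pt ((Real.sqrt 99 / 10 - 1) / 2) (1/20) h20

def P : ℍ := pt (-(5 * Real.sqrt 3)) 5 h5
def DD : ℍ := pt (5 * Real.sqrt 3) 5 h5
def B1 : ℍ := pt ((1 + Real.sqrt 99 / 10) / 2) (1/20) h20
def B2 : ℍ := pt ((1 - Real.sqrt 99 / 10) / 2) (1/20) h20
def M0 : ℍ := pt (1/2) 5 h5

lemma w1_def : w1 = pt (Real.sqrt 3 / 20) (1/20) h20 := rfl
lemma w2_def : w2 = pt (Real.sqrt 399 / 20) (1/20) h20 := rfl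
lemma w3_def : w3 = pt (-(Real.sqrt 399) / 20) (1/20) h20 := rfl
lemma w4_def : w4 = pt (-(Real.sqrt 3) / 20) (1/20) h20 := rfl
lemma w5_def : w5 = pt (-((1 + Real.sqrt 99 / 10) / 2)) (1/20) h20 := rfl
lemma w6_def : w6 = pt (-(1/2)) (1/20) h20 := rfl
lemma w7_def : w7 = pt ((Real.sqrt 99 / 10 - 1) / 2) (1/20) h20 := rfl
lemma P_def : P = pt (-(5 * Real.sqrt 3)) 5 h5 := rfl
lemma DD_def : DD = pt (5 * Real.sqrt 3) 5 h5 := rfl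
lemma B1_def : B1 = pt ((1 + Real.sqrt 99 / 10) / 2) (1/20) h20 := rfl
lemma B2_def : B2 = pt ((1 - Real.sqrt 99 / 10) / 2) (1/20) h20 := rfl

lemma w1_coe : (w1 : ℂ) = ⟨Real.sqrt 3 / 20, 1/20⟩ := rfl
lemma w2_coe : (w2 : ℂ) = ⟨Real.sqrt 399 / 20, 1/20⟩ := rfl
lemma w3_coe : (w3 : ℂ) = ⟨-(Real.sqrt 399) / 20, 1/20⟩ := rfl
lemma w4_coe : (w4 : ℂ) = ⟨-(Real.sqrt 3) / 20, 1/20⟩ := rfl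
lemma w5_coe : (w5 : ℂ) = ⟨-((1 + Real.sqrt 99 / 10) / 2), 1/20⟩ := rfl
lemma w6_coe : (w6 : ℂ) = ⟨-(1/2), 1/20⟩ := rfl
lemma w7_coe : (w7 : ℂ) = ⟨(Real.sqrt 99 / 10 - 1) / 2, 1/20⟩ := rfl
lemma P_coe : (P : ℂ) = ⟨-(5 * Real.sqrt 3), 5⟩ := rfl
lemma DD_coe : (DD : ℂ) = ⟨5 * Real.sqrt 3, 5⟩ := rfl
lemma B1_coe : (B1 : ℂ) = ⟨(1 + Real.sqrt 99 / 10) / 2, 1/20⟩ := rfl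
lemma B2_coe : (B2 : ℂ) = ⟨(1 - Real.sqrt 99 / 10) / 2, 1/20⟩ := rfl
lemma M0_coe : (M0 : ℂ) = ⟨1/2, 5⟩ := rfl

-- The seven Möbius evaluations
lemma s1 : Sm • w1 = P := by
  apply Sm_smul
  rw [w1_coe, P_coe]
  apply Complex.ext <;>
    simp [Complex.mul_re, Complex.mul_im] <;>
    nlinarith [r3_sq]

lemma s2 : Sm • w2 = w3 := by
  apply Sm_smul
  rw [w2_coe, w3_coe]
  apply Complex.ext <;>
    simp [Complex.mul_re, Complex.mul_im] <;>
    nlinarith [r399_sq]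

lemma s3 : Sm • w3 = w2 := by
  apply Sm_smul
  rw [w3_coe, w2_coe]
  apply Complex.ext <;>
    simp [Complex.mul_re, Complex.mul_im] <;>
    nlinarith [r399_sq]

lemma s4 : Sm • w4 = DD := by
  apply Sm_smul
  rw [w4_coe, DD_coe]
  apply Complex.ext <;>
    simp [Complex.mul_re, Complex.mul_im] <;>
    nlinarith [r3_sq]

lemma s5 : A2 • w5 = B1 := by
  apply A2_smul
  rw [w5_coe, B1_coe]
  apply Complex.ext <;>
    simp [Complex.mul_re, Complex.mul_im, Complex.add_re, Complex.add_im] <;>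
    nlinarith [r99_sq]

set_option linter.unnecessarySeqFocus false in
lemma s6 : A2 • w6 = M0 := by
  apply A2_smul
  rw [w6_coe, M0_coe]
  apply Complex.ext <;>
    simp [Complex.mul_re, Complex.mul_im, Complex.add_re, Complex.add_im] <;>
    nlinarith

lemma s7 : A2 • w7 = B2 := by
  apply A2_smul
  rw [w7_coe, B2_coe]
  apply Complex.ext <;>
    simp [Complex.mul_re, Complex.mul_im, Complex.add_re, Complex.add_im] <;>
    nlinarith [r99_sq]

end S10

end S10aux

open S10 UpperHalfPlane

/-- There is no `PSL(2,ℤ)`-invariant finite asymmetric metric on the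
hyperbolic plane `ℍ` for which every anti-clockwise horocycle segment
`t ↦ [[1,t],[0,1]]·z = t +ᵥ z` is a geodesic (i.e. the distance is additive along
such segments for increasing parameters). -/
theorem stmt10 :
    ¬ ∃ d : ℍ → ℍ → ℝ,
      (∀ x y, 0 ≤ d x y) ∧
      (∀ x, d x x = 0) ∧
      (∀ x y, d x y = 0 → d y x = 0 → x = y) ∧
      (∀ x y z, d x z ≤ d x y + d y z) ∧
      (∀ (A : SL(2, ℤ)) (x y : ℍ), d (A • x) (A • y) = d x y) ∧
      (∀ (z : ℍ) (s t u : ℝ), s ≤ t → t ≤ u →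
        d (s +ᵥ z) (u +ᵥ z) = d (s +ᵥ z) (t +ᵥ z) + d (t +ᵥ z) (u +ᵥ z)) := by
  rintro ⟨d, hpos, hrefl, hsep, htri, hinv, hgeo⟩
  -- translation invariance
  have Tinv : ∀ (k : ℤ) (z w : ℍ), d ((k : ℝ) +ᵥ z) ((k : ℝ) +ᵥ w) = d z w := by
    intro k z w
    have := hinv (Tk k) z w
    rwa [Tk_smul, Tk_smul] at this
  -- geodesic splitting in a convenient form
  have split : ∀ (z : ℍ) (t u : ℝ), 0 ≤ t → t ≤ u →
      d z (u +ᵥ z) = d z (t +ᵥ z) + d (t +ᵥ z) (u +ᵥ z) := by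
    intro z t u ht htu
    have := hgeo z 0 t u ht htu
    rwa [zero_vadd] at this
  -- unit length is constant along horizontal translates (to the right)
  have uc0 : ∀ (z : ℍ) (t : ℝ), 0 ≤ t →
      d (t +ᵥ z) ((1 : ℝ) +ᵥ (t +ᵥ z)) = d z ((1 : ℝ) +ᵥ z) := by
    intro z t ht
    have key : (1 : ℝ) +ᵥ (t +ᵥ z) = (t + 1) +ᵥ z := by
      rw [← add_vadd]; exact congrArg (· +ᵥ z) (by ring)
    have e1 := split z t (t + 1) ht (by linarith)
    have e2 := split z 1 (t + 1) (by norm_num) (by linarith)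
    have e3 : d ((1 : ℝ) +ᵥ z) ((t + 1 : ℝ) +ᵥ z) = d z (t +ᵥ z) := by
      have h1 := Tinv 1 z (t +ᵥ z)
      have c1 : ((1 : ℤ) : ℝ) = (1 : ℝ) := by norm_num
      rw [c1] at h1
      rw [← h1]
      exact (congrArg (d ((1 : ℝ) +ᵥ z)) key).symm
    rw [key]
    linarith
  -- unit length depends only on the height
  have uc : ∀ (z w : ℍ), z.im = w.im →
      d z ((1 : ℝ) +ᵥ z) = d w ((1 : ℝ) +ᵥ w) := by
    intro z w him
    rcases le_total z.re w.re with hle | hle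
    · have hw : w = (w.re - z.re) +ᵥ z := by
        apply UpperHalfPlane.ext
        rw [UpperHalfPlane.coe_vadd]
        apply Complex.ext <;> simp [him]
      rw [hw, uc0 z _ (by linarith)]
    · have hz : z = (z.re - w.re) +ᵥ w := by
        apply UpperHalfPlane.ext
        rw [UpperHalfPlane.coe_vadd]
        apply Complex.ext <;> simp [him]
      rw [hz, uc0 w _ (by linarith)]
  -- exact integer multiples
  have mulk : ∀ (z : ℍ) (n : ℕ), d z ((n : ℝ) +ᵥ z) = n * d z ((1 : ℝ) +ᵥ z) := by
    intro z n
    induction n with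
    | zero => simp [hrefl]
    | succ n ih =>
      have e := split z n (n + 1) (by positivity) (by linarith)
      have key : ((n : ℝ) + 1) +ᵥ z = (1 : ℝ) +ᵥ ((n : ℝ) +ᵥ z) := by
        rw [← add_vadd]; exact congrArg (· +ᵥ z) (by ring)
      have e2 : d ((n : ℝ) +ᵥ z) (((n : ℝ) + 1) +ᵥ z) = d z ((1 : ℝ) +ᵥ z) := by
        rw [key]; exact uc0 z n (by positivity)
      push_cast
      linarith
  -- chunk bounds
  have chunk1 : ∀ (z : ℍ) (t : ℝ), 0 ≤ t → t ≤ 1 →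
      d z (t +ᵥ z) ≤ d z ((1 : ℝ) +ᵥ z) := by
    intro z t ht ht1
    have e := split z t 1 ht ht1
    have := hpos (t +ᵥ z) ((1 : ℝ) +ᵥ z)
    linarith
  have chunk2 : ∀ (z : ℍ) (t : ℝ), 0 ≤ t → t ≤ 2 →
      d z (t +ᵥ z) ≤ 2 * d z ((1 : ℝ) +ᵥ z) := by
    intro z t ht ht2
    have e := split z t 2 ht ht2
    have e2 : d z ((2 : ℝ) +ᵥ z) = 2 * d z ((1 : ℝ) +ᵥ z) := by
      have := mulk z 2
      push_cast at this
      exact this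
    have := hpos (t +ᵥ z) ((2 : ℝ) +ᵥ z)
    linarith
  -- the two unit lengths
  set ℓh := d w1 ((1 : ℝ) +ᵥ w1) with hℓh
  set ℓ5 := d P ((1 : ℝ) +ᵥ P) with hℓ5
  have ℓh_nonneg : 0 ≤ ℓh := hpos _ _
  have ℓ5_nonneg : 0 ≤ ℓ5 := hpos _ _
  have uch : ∀ z : ℍ, z.im = 1/20 → d z ((1 : ℝ) +ᵥ z) = ℓh := by
    intro z hz; exact uc z w1 (by rw [hz]; rfl)
  have uc5 : ∀ z : ℍ, z.im = 5 → d z ((1 : ℝ) +ᵥ z) = ℓ5 := by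
    intro z hz; exact uc z P (by rw [hz]; rfl)
  obtain ⟨hr3l, hr3u⟩ := r3_bounds
  obtain ⟨hr99l, hr99u⟩ := r99_bounds
  obtain ⟨hr399l, hr399u⟩ := r399_bounds
  have hr3n : 0 ≤ Real.sqrt 3 := Real.sqrt_nonneg 3
  have hr399n : 0 ≤ Real.sqrt 399 := Real.sqrt_nonneg 399
  have hr33 : Real.sqrt 3 ≤ Real.sqrt 399 := r3_le_r399
  -- CHAIN 1 : 16 ℓ5 ≤ 3 ℓh
  have chain1 : 16 * ℓ5 ≤ 3 * ℓh := by
    have lhs : d P ((17 : ℝ) +ᵥ P) = 17 * ℓ5 := by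
      have e := mulk P 17
      push_cast at e
      rw [e, uc5 P rfl]
    have seg1 : d P w3 ≤ ℓh := by
      have einv := hinv Sm w1 w2
      rw [s1, s2] at einv
      have hw2 : w2 = ((Real.sqrt 399 - Real.sqrt 3) / 20) +ᵥ w1 := by
        rw [w2_def, w1_def, vadd_pt]
        exact pt_congr _ (by ring)
      calc d P w3 = d w1 w2 := einv
        _ = d w1 (((Real.sqrt 399 - Real.sqrt 3) / 20) +ᵥ w1) := by rw [← hw2]
        _ ≤ d w1 ((1:ℝ) +ᵥ w1) := chunk1 w1 _ (by linarith) (by linarith)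
        _ = ℓh := uch w1 rfl
    have seg2 : d w3 (pt (Real.sqrt 399 / 20 - 1) (1/20) h20) ≤ ℓh := by
      have hq : pt (Real.sqrt 399 / 20 - 1) (1/20) h20 = (Real.sqrt 399 / 10 - 1) +ᵥ w3 := by
        rw [w3_def, vadd_pt]
        exact pt_congr _ (by ring)
      rw [hq]
      calc d w3 ((Real.sqrt 399 / 10 - 1) +ᵥ w3) ≤ d w3 ((1:ℝ) +ᵥ w3) :=
            chunk1 w3 _ (by linarith) (by linarith)
        _ = ℓh := uch w3 rfl
    have seg3 : d (pt (Real.sqrt 399 / 20 - 1) (1/20) h20) (pt (5 * Real.sqrt 3 - 1) 5 h5) ≤ ℓh := by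
      have e1 : pt (Real.sqrt 399 / 20 - 1) (1/20) h20 = ((-1 : ℤ) : ℝ) +ᵥ w2 := by
        rw [w2_def, vadd_pt]
        exact pt_congr _ (by push_cast; ring)
      have e2 : pt (5 * Real.sqrt 3 - 1) 5 h5 = ((-1 : ℤ) : ℝ) +ᵥ DD := by
        rw [DD_def, vadd_pt]
        exact pt_congr _ (by push_cast; ring)
      rw [e1, e2, Tinv (-1) w2 DD]
      have einv := hinv Sm w3 w4
      rw [s3, s4] at einv
      have hw4 : w4 = ((Real.sqrt 399 - Real.sqrt 3) / 20) +ᵥ w3 := by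
        rw [w3_def, w4_def, vadd_pt]
        exact pt_congr _ (by ring)
      calc d w2 DD = d w3 w4 := einv
        _ = d w3 (((Real.sqrt 399 - Real.sqrt 3) / 20) +ᵥ w3) := by rw [← hw4]
        _ ≤ d w3 ((1:ℝ) +ᵥ w3) := chunk1 w3 _ (by linarith) (by linarith)
        _ = ℓh := uch w3 rfl
    have seg4 : d (pt (5 * Real.sqrt 3 - 1) 5 h5) ((17 : ℝ) +ᵥ P) ≤ ℓ5 := by
      have he : (17 : ℝ) +ᵥ P = (18 - 10 * Real.sqrt 3) +ᵥ pt (5 * Real.sqrt 3 - 1) 5 h5 := by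
        rw [P_def, vadd_pt, vadd_pt]
        exact pt_congr _ (by ring)
      rw [he]
      calc d (pt (5 * Real.sqrt 3 - 1) 5 h5)
            ((18 - 10 * Real.sqrt 3) +ᵥ pt (5 * Real.sqrt 3 - 1) 5 h5)
          ≤ d (pt (5 * Real.sqrt 3 - 1) 5 h5) ((1:ℝ) +ᵥ pt (5 * Real.sqrt 3 - 1) 5 h5) :=
            chunk1 _ _ (by linarith) (by linarith)
        _ = ℓ5 := uc5 _ rfl
    have t1 := htri P w3 ((17 : ℝ) +ᵥ P)
    have t2 := htri w3 (pt (Real.sqrt 399 / 20 - 1) (1/20) h20) ((17 : ℝ) +ᵥ P)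
    have t3 := htri (pt (Real.sqrt 399 / 20 - 1) (1/20) h20) (pt (5 * Real.sqrt 3 - 1) 5 h5)
      ((17 : ℝ) +ᵥ P)
    linarith
  -- CHAIN 2 : 3 ℓh ≤ 6 ℓ5
  have chain2 : 3 * ℓh ≤ 6 * ℓ5 := by
    set v := Real.sqrt 99 / 10 with hv
    have hv0 : 0 ≤ v := by rw [hv]; linarith
    have hv1 : v ≤ 1 := by rw [hv]; linarith
    have uB1 : d B1 ((1 : ℝ) +ᵥ B1) = ℓh := uch B1 rfl
    have e6 : d B1 ((6 : ℝ) +ᵥ B1) = 6 * ℓh := by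
      have e := mulk B1 6
      push_cast at e
      rw [e, uB1]
    have esplit := split B1 (6 - v) 6 (by linarith) (by linarith)
    have tail : d ((6 - v) +ᵥ B1) ((6 : ℝ) +ᵥ B1) ≤ ℓh := by
      have he : (6 : ℝ) +ᵥ B1 = v +ᵥ ((6 - v) +ᵥ B1) := by
        rw [← add_vadd]; exact congrArg (· +ᵥ B1) (by ring)
      rw [he]
      calc d ((6 - v) +ᵥ B1) (v +ᵥ ((6 - v) +ᵥ B1))
          ≤ d ((6 - v) +ᵥ B1) ((1:ℝ) +ᵥ ((6 - v) +ᵥ B1)) := chunk1 _ _ hv0 hv1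
        _ = ℓh := uch _ (by rw [vadd_im]; rfl)
    have hid : (6 - v) +ᵥ B1 = (6 : ℝ) +ᵥ B2 := by
      rw [B1_def, B2_def, vadd_pt, vadd_pt]
      exact pt_congr _ (by rw [hv]; ring)
    have seg1 : d B1 M0 ≤ ℓh := by
      have einv := hinv A2 w5 w6
      rw [s5, s6] at einv
      have hw6 : w6 = (v / 2) +ᵥ w5 := by
        rw [w5_def, w6_def, vadd_pt]
        exact pt_congr _ (by rw [hv]; ring)
      calc d B1 M0 = d w5 w6 := einv
        _ = d w5 ((v / 2) +ᵥ w5) := by rw [← hw6]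
        _ ≤ d w5 ((1:ℝ) +ᵥ w5) := chunk1 w5 _ (by linarith) (by linarith)
        _ = ℓh := uch w5 rfl
    have seg2 : d M0 ((6 : ℝ) +ᵥ M0) = 6 * ℓ5 := by
      have e := mulk M0 6
      push_cast at e
      rw [e, uc5 M0 rfl]
    have seg3 : d ((6 : ℝ) +ᵥ M0) ((6 : ℝ) +ᵥ B2) ≤ ℓh := by
      have h6 := Tinv 6 M0 B2
      have c1 : ((6 : ℤ) : ℝ) = (6 : ℝ) := by norm_num
      rw [c1] at h6
      rw [h6]
      have einv := hinv A2 w6 w7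
      rw [s6, s7] at einv
      have hw7 : w7 = (v / 2) +ᵥ w6 := by
        rw [w6_def, w7_def, vadd_pt]
        exact pt_congr _ (by rw [hv]; ring)
      calc d M0 B2 = d w6 w7 := einv
        _ = d w6 ((v / 2) +ᵥ w6) := by rw [← hw7]
        _ ≤ d w6 ((1:ℝ) +ᵥ w6) := chunk1 w6 _ (by linarith) (by linarith)
        _ = ℓh := uch w6 rfl
    have t1 := htri B1 M0 ((6 : ℝ) +ᵥ B2)
    have t2 := htri M0 ((6 : ℝ) +ᵥ M0) ((6 : ℝ) +ᵥ B2)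
    rw [hid] at esplit tail
    linarith
  -- both unit lengths vanish
  have hℓ5_zero : ℓ5 = 0 := by linarith
  have hℓh_zero : ℓh = 0 := by linarith
  -- endgame
  have hw2w3 : w2 = (Real.sqrt 399 / 10) +ᵥ w3 := by
    rw [w2_def, w3_def, vadd_pt]
    exact pt_congr _ (by ring)
  have fwd : d w3 w2 = 0 := by
    have hle : d w3 w2 ≤ 2 * ℓh := by
      calc d w3 w2 = d w3 ((Real.sqrt 399 / 10) +ᵥ w3) := by rw [← hw2w3]
        _ ≤ 2 * d w3 ((1:ℝ) +ᵥ w3) := chunk2 w3 _ (by linarith) (by linarith)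
        _ = 2 * ℓh := by rw [uch w3 rfl]
    have := hpos w3 w2
    linarith
  have bwd : d w2 w3 = 0 := by
    have einv := hinv Sm w3 w2
    rw [s3, s2] at einv
    rw [einv, fwd]
  have heq : w3 = w2 := hsep w3 w2 fwd bwd
  have hre : -(Real.sqrt 399) / 20 = Real.sqrt 399 / 20 := congrArg UpperHalfPlane.re heq
  linarith
end
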